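/- arXiv:1703.03641 — 2 statements merged into one kernel-verified Lean document; each statement's English description precedes it below -/
import Mathlib

section
/- For a connected graph on n ≥ 2 vertices, the average shortest path length l = (2/(n(n-1))) ∑_{i<j} d(i,j) satisfies l ≤ (n+1)/3, with equality attained by the path graph. -/
open Finset
open SimpleGraph

lemma exists_dist_pred {V : Type} {G : SimpleGraph V} (hc : G.Connected) (v : V) (k : ℕ) :
    ∀ w : V, G.dist v w = k + 1 → ∃ w' : V, G.dist v w' = k := by
  intro w hw
  obtain ⟨p, hp⟩ := (hc v w).exists_walk_length_eq_dist
  have hlen : p.reverse.length = k + 1 := by rw [SimpleGraph.Walk.length_reverse, hp, hw]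
  have hnn : ¬ p.reverse.Nil := by
    rw [SimpleGraph.Walk.nil_iff_length_eq]; omega
  obtain ⟨u, hadj, q, hq⟩ := SimpleGraph.Walk.not_nil_iff.mp hnn
  refine ⟨u, le_antisymm ?_ ?_⟩
  · have := SimpleGraph.dist_le q.reverse
    have hql : q.length = k := by
      have := congrArg SimpleGraph.Walk.length hq
      simp at this; omega
    simpa [hql] using this
  · have htri := hc.dist_triangle (u := v) (v := u) (w := w)
    have h1 : G.dist u w ≤ 1 := by
      rw [SimpleGraph.dist_comm]
      exact le_of_eq (SimpleGraph.dist_eq_one_iff_adj.mpr hadj)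
    omega

lemma apl_exists_dist_eq {V : Type} {G : SimpleGraph V} (hc : G.Connected) (v : V) :
    ∀ (k j : ℕ), j ≤ k → (∃ w, G.dist v w = k) → ∃ w', G.dist v w' = j := by
  intro k
  induction k with
  | zero => intro j hj _; exact ⟨v, by simpa [Nat.le_zero.mp hj] using SimpleGraph.dist_self G⟩
  | succ m ih =>
    intro j hj ⟨w, hw⟩
    rcases Nat.lt_or_ge j (m+1) with h | h
    · exact ih j (by omega) (exists_dist_pred hc v m w hw)
    · refine ⟨w, ?_⟩
      have hjm : j = m+1 := le_antisymm hj h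
      rw [hjm]
      exact hw

lemma apl_sum_eq {V : Type} [Fintype V] (f : V → ℕ) (N : ℕ) (hf : ∀ w, f w ≤ N) :
    ∑ w, f w = ∑ k ∈ range N, (univ.filter (fun w => k < f w)).card := by
  simp only [Finset.card_filter]
  rw [Finset.sum_comm]
  refine Finset.sum_congr rfl fun w _ => ?_
  have hcf : ∑ x ∈ range N, (if x < f w then 1 else 0)
      = ((range N).filter (fun k => k < f w)).card := (Finset.card_filter _ _).symm
  rw [hcf]
  have h : (range N).filter (fun k => k < f w) = range (f w) := by
    ext k; simp only [mem_filter, mem_range]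
    exact ⟨fun ⟨_, h⟩ => h, fun h => ⟨lt_of_lt_of_le h (hf w), h⟩⟩
  rw [h, Finset.card_range]

lemma apl_card_le {V : Type} [Fintype V] [DecidableEq V] {G : SimpleGraph V}
    (hc : G.Connected) (v : V) (k : ℕ) (hex : ∃ w, k + 1 ≤ G.dist v w) :
    k + 1 ≤ (univ.filter (fun w => G.dist v w ≤ k)).card := by
  classical
  obtain ⟨w, hw⟩ := hex
  have hex' : ∀ j : ℕ, ∃ w', j ≤ k → G.dist v w' = j := by
    intro j
    by_cases hj : j ≤ k
    · obtain ⟨w', hw'⟩ := apl_exists_dist_eq hc v (G.dist v w) j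
        (le_trans hj (le_trans (Nat.le_succ k) hw)) ⟨w, rfl⟩
      exact ⟨w', fun _ => hw'⟩
    · exact ⟨v, fun h => absurd h hj⟩
  choose g hg using hex'
  have hmaps : ∀ j ∈ range (k + 1), g j ∈ univ.filter (fun w => G.dist v w ≤ k) := by
    intro j hj
    rw [mem_range, Nat.lt_succ_iff] at hj
    simp only [mem_filter, mem_univ, true_and]
    rw [hg j hj]; exact hj
  have hinj : Set.InjOn g (range (k + 1)) := by
    intro a ha b hb hab
    rw [Finset.coe_range, Set.mem_Iio] at ha hb
    have h1 := hg a (by omega)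
    have h2 := hg b (by omega)
    rw [hab, h2] at h1
    omega
  have := Finset.card_le_card_of_injOn g hmaps hinj
  simpa using this

lemma apl_dist_lt {V : Type} [Fintype V] [DecidableEq V] {G : SimpleGraph V}
    (hc : G.Connected) (v w : V) : G.dist v w ≤ Fintype.card V - 1 := by
  by_contra h
  push_neg at h
  have h1 : (Fintype.card V - 1) + 1 ≤ G.dist v w := by omega
  have h2 := apl_card_le hc v (Fintype.card V - 1) ⟨w, h1⟩
  have h3 := Finset.card_filter_le (univ : Finset V) (fun w => G.dist v w ≤ Fintype.card V - 1)
  rw [Finset.card_univ] at h3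
  -- the vertex w itself is outside the filter
  have hw : w ∉ univ.filter (fun u => G.dist v u ≤ Fintype.card V - 1) := by
    simp only [mem_filter, mem_univ, true_and]; omega
  have h4 : (univ.filter (fun u => G.dist v u ≤ Fintype.card V - 1)).card + 1 ≤ Fintype.card V := by
    have := Finset.card_lt_card (Finset.ssubset_iff_of_subset (Finset.filter_subset _ _) |>.mpr ⟨w, mem_univ w, hw⟩)
    rw [Finset.card_univ] at this
    omega
  have : 1 ≤ Fintype.card V := Fintype.card_pos_iff.mpr ⟨v⟩
  omega

lemma apl_sum_dist_le {V : Type} [Fintype V] [DecidableEq V] {G : SimpleGraph V}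
    (hc : G.Connected) (v : V) :
    ∑ w, G.dist v w ≤ ∑ i ∈ range (Fintype.card V), i := by
  classical
  set n := Fintype.card V with hn
  have hcard : ∀ k, (univ.filter (fun w => k < G.dist v w)).card ≤ n - (k + 1) := by
    intro k
    rcases Finset.eq_empty_or_nonempty (univ.filter (fun w => k < G.dist v w)) with he | ⟨w, hw⟩
    · simp [he]
    · rw [mem_filter] at hw
      have h1 := apl_card_le hc v k ⟨w, hw.2⟩
      have h2 : (univ.filter (fun w => k < G.dist v w)).card
          = n - (univ.filter (fun w => G.dist v w ≤ k)).card := by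
        have := Finset.card_filter_add_card_filter_not
          (s := (univ : Finset V)) (p := fun w => G.dist v w ≤ k)
        rw [Finset.card_univ] at this
        have heq : (univ.filter (fun w => ¬ G.dist v w ≤ k)) = univ.filter (fun w => k < G.dist v w) := by
          apply Finset.filter_congr; intro x _; exact not_le
        rw [heq] at this
        omega
      omega
  have hle : ∀ w, G.dist v w ≤ n := fun w => le_trans (apl_dist_lt hc v w) (Nat.sub_le n 1)
  rw [apl_sum_eq (fun w => G.dist v w) n hle]
  calc ∑ k ∈ range n, (univ.filter (fun w => k < G.dist v w)).card
      ≤ ∑ k ∈ range n, (n - (k + 1)) := Finset.sum_le_sum (fun k _ => hcard k)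
    _ = ∑ k ∈ range n, k := by
        rw [← Finset.sum_range_reflect]
        refine Finset.sum_congr rfl fun k hk => ?_
        rw [mem_range] at hk
        omega

lemma apl_reachable_induce {V : Type} {G : SimpleGraph V} {s : Set V} :
    ∀ {x y : V} (p : G.Walk x y) (_ : ∀ z ∈ p.support, z ∈ s) (hx : x ∈ s) (hy : y ∈ s),
      (G.induce s).Reachable ⟨x, hx⟩ ⟨y, hy⟩ := by
  intro x y p
  induction p with
  | nil =>
    intro _ hx hy
    exact Reachable.refl _
  | @cons x b y h q ih =>
    intro hp hx hy
    have hb : b ∈ s := hp b (by simp [Walk.support_cons])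
    have hadj : (G.induce s).Adj ⟨x, hx⟩ ⟨b, hb⟩ := by
      simp only [comap_adj, Function.Embedding.coe_subtype]
      exact h
    exact (hadj.reachable).trans (ih (fun z hz => hp z (by simp [Walk.support_cons, hz])) hb hy)

lemma apl_dist_induce_le {V : Type} {G : SimpleGraph V} {s : Set V}
    (hc : (G.induce s).Connected) (x y : s) :
    G.dist x.1 y.1 ≤ (G.induce s).dist x y := by
  obtain ⟨p, hp⟩ := (hc x y).exists_walk_length_eq_dist
  have := SimpleGraph.dist_le (p.map (SimpleGraph.Embedding.induce s).toHom)
  rwa [Walk.length_map, hp] at this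

lemma apl_main : ∀ (n : ℕ) (V : Type) [Fintype V] [DecidableEq V] (G : SimpleGraph V),
    G.Connected → Fintype.card V = n →
    3 * (∑ u : V, ∑ w : V, G.dist u w) + n ≤ n ^ 3 := by
  intro n
  induction n using Nat.strong_induction_on with
  | _ n ih =>
  intro V _ _ G hc hcard
  rcases Nat.lt_or_ge n 2 with hn2 | hn2
  · -- n = 0 or 1 : all distances are 0
    have hz : ∀ u w : V, G.dist u w = 0 := by
      intro u w
      have : u = w := by
        have h1 : Fintype.card V ≤ 1 := by omega
        exact Fintype.card_le_one_iff.mp h1 u w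
      rw [this, SimpleGraph.dist_self]
    simp only [hz, Finset.sum_const_zero, Nat.mul_zero, Nat.zero_add]
    interval_cases n <;> norm_num
  · -- n ≥ 2
    have hne : Nonempty V := by
      rw [← Fintype.card_pos_iff]; omega
    obtain ⟨u₀⟩ := hne
    -- pick v at maximal distance from u₀
    obtain ⟨v, -, hv⟩ := Finset.exists_max_image (univ : Finset V) (fun w => G.dist u₀ w)
      ⟨u₀, mem_univ u₀⟩
    have hvmax : ∀ w : V, G.dist u₀ w ≤ G.dist u₀ v := fun w => hv w (mem_univ w)
    have hvne : v ≠ u₀ := by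
      obtain ⟨w, hw⟩ : ∃ w : V, w ≠ u₀ := by
        by_contra h
        push_neg at h
        have : Fintype.card V ≤ 1 := Fintype.card_le_one_iff.mpr (fun a b => (h a).trans (h b).symm)
        omega
      have hpos : 0 < G.dist u₀ w := (hc u₀ w).pos_dist_of_ne (Ne.symm hw)
      intro h
      rw [h] at hvmax
      have := hvmax w
      rw [SimpleGraph.dist_self] at this
      omega
    -- every other vertex reaches u₀ by a shortest walk avoiding v
    have havoid : ∀ x : V, x ≠ v → ∃ p : G.Walk x u₀, ∀ z ∈ p.support, z ≠ v := by
      intro x hx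
      obtain ⟨p, hp⟩ := (hc x u₀).exists_walk_length_eq_dist
      refine ⟨p, fun z hz hzv => ?_⟩
      have hz' : v ∈ p.support := by rw [← hzv]; exact hz
      have hspec := p.take_spec hz'
      have hlen : (p.takeUntil v hz').length + (p.dropUntil v hz').length = p.length := by
        conv_rhs => rw [← hspec]
        rw [Walk.length_append]
      have h1 : G.dist u₀ v ≤ (p.dropUntil v hz').length := by
        rw [SimpleGraph.dist_comm]
        exact SimpleGraph.dist_le _
      have h2 : G.dist u₀ x ≤ G.dist u₀ v := hvmax x
      have h3 : G.dist u₀ x = p.length := by rw [SimpleGraph.dist_comm]; omega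
      have h4 : (p.takeUntil v hz').length = 0 := by omega
      exact hx (Walk.eq_of_length_eq_zero h4)
    -- the induced graph on the complement of v
    set s : Set V := {v}ᶜ with hs
    have hu₀s : u₀ ∈ s := by simp [hs]; exact fun h => hvne h.symm
    have hG' : (G.induce s).Connected := by
      rw [connected_iff]
      refine ⟨fun x y => ?_, ⟨⟨u₀, hu₀s⟩⟩⟩
      · 
        have hx : (G.induce s).Reachable x ⟨u₀, hu₀s⟩ := by
          obtain ⟨p, hp⟩ := havoid x.1 (Set.mem_compl_singleton_iff.mp x.2)
          have := apl_reachable_induce p (fun z hz => by simp [hs]; exact hp z hz) x.2 hu₀s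
          simpa using this
        have hy : (G.induce s).Reachable y ⟨u₀, hu₀s⟩ := by
          obtain ⟨p, hp⟩ := havoid y.1 (Set.mem_compl_singleton_iff.mp y.2)
          have := apl_reachable_induce p (fun z hz => by simp [hs]; exact hp z hz) y.2 hu₀s
          simpa using this
        exact hx.trans hy.symm
    have hcard' : Fintype.card s = n - 1 := by
      show Fintype.card ({v}ᶜ : Set V) = n - 1
      rw [Fintype.card_compl_set, Set.card_singleton, hcard]
    -- apply induction hypothesis
    have hIH := ih (n-1) (by omega) s (G.induce s) hG' hcard'
    -- per-vertex bound
    have hR : ∑ w, G.dist v w ≤ ∑ i ∈ range n, i := by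
      have := apl_sum_dist_le hc v
      rwa [hcard] at this
    -- splitting the double sum
    have hsplit : ∑ u : V, ∑ w : V, G.dist u w ≤
        2 * (∑ w, G.dist v w) + ∑ u : s, ∑ w : s, G.dist u.1 w.1 := by
      classical
      have hmem : ∀ x : V, x ∈ univ.erase v ↔ x ∈ s := by
        intro x; simp [hs, Finset.mem_erase]
      have hsub : ∀ f : V → ℕ, ∑ u ∈ univ.erase v, f u = ∑ u : s, f u.1 := by
        intro f
        exact Finset.sum_subtype (univ.erase v) hmem f
      calc ∑ u : V, ∑ w : V, G.dist u w
          = (∑ w : V, G.dist v w) + ∑ u ∈ univ.erase v, ∑ w : V, G.dist u w :=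
            (Finset.add_sum_erase univ (fun u => ∑ w : V, G.dist u w) (mem_univ v)).symm
        _ = (∑ w : V, G.dist v w) + ∑ u ∈ univ.erase v,
              (G.dist u v + ∑ w ∈ univ.erase v, G.dist u w) := by
            congr 1
            refine Finset.sum_congr rfl fun u _ => ?_
            exact (Finset.add_sum_erase univ (fun w => G.dist u w) (mem_univ v)).symm
        _ = (∑ w : V, G.dist v w) + ((∑ u ∈ univ.erase v, G.dist u v)
              + ∑ u ∈ univ.erase v, ∑ w ∈ univ.erase v, G.dist u w) := by
            rw [Finset.sum_add_distrib]
        _ ≤ (∑ w : V, G.dist v w) + ((∑ w : V, G.dist v w)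
              + ∑ u ∈ univ.erase v, ∑ w ∈ univ.erase v, G.dist u w) := by
            have hbd : ∑ u ∈ univ.erase v, G.dist u v ≤ ∑ w : V, G.dist v w := by
              calc ∑ u ∈ univ.erase v, G.dist u v = ∑ u ∈ univ.erase v, G.dist v u :=
                    Finset.sum_congr rfl fun u _ => SimpleGraph.dist_comm
                _ ≤ ∑ u : V, G.dist v u :=
                    Finset.sum_le_sum_of_subset (Finset.erase_subset v univ)
            omega
        _ = 2 * (∑ w, G.dist v w) + ∑ u : s, ∑ w : s, G.dist u.1 w.1 := by
            rw [hsub (fun u => ∑ w ∈ univ.erase v, G.dist u w)]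
            have hin : ∀ u : s, ∑ w ∈ univ.erase v, G.dist u.1 w = ∑ w : s, G.dist u.1 w.1 :=
              fun u => hsub (fun w => G.dist u.1 w)
            rw [Finset.sum_congr rfl fun u _ => hin u]
            ring
    have hT : ∑ u : s, ∑ w : s, G.dist u.1 w.1 ≤ ∑ u : s, ∑ w : s, (G.induce s).dist u w :=
      Finset.sum_le_sum fun u _ => Finset.sum_le_sum fun w _ => apl_dist_induce_le hG' u w
    -- gauss sum
    have hgauss : (∑ i ∈ range n, i) * 2 = n * (n - 1) := Finset.sum_range_id_mul_two n
    -- combine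
    have h2R : 2 * (∑ w, G.dist v w) ≤ n * (n-1) := by omega
    set S := ∑ u : V, ∑ w : V, G.dist u w
    set T := ∑ u : s, ∑ w : s, (G.induce s).dist u w
    have hfin : 3 * S + n ≤ n ^ 3 := by
      have e1 : 3 * T + (n-1) ≤ (n-1)^3 := hIH
      have e2 : S ≤ 2 * (∑ w, G.dist v w) + T := le_trans hsplit (by omega)
      have e3 : 3 * S ≤ 3 * (n * (n-1)) + 3 * T := by
        calc 3 * S ≤ 3 * (2 * (∑ w, G.dist v w) + T) := by omega
          _ = 3 * (2 * (∑ w, G.dist v w)) + 3 * T := by ring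
          _ ≤ 3 * (n * (n-1)) + 3 * T := by omega
      -- now pure arithmetic with m := n - 1
      obtain ⟨m, rfl⟩ : ∃ m, n = m + 1 := ⟨n - 1, by omega⟩
      simp only [Nat.add_sub_cancel] at e1 e3
      nlinarith [e1, e3]
    exact hfin

lemma apl_path_lower {n : ℕ} : ∀ {u v : Fin n} (p : (pathGraph n).Walk u v),
    v.val - u.val ≤ p.length := by
  intro u v p
  induction p with
  | nil => omega
  | @cons x b y h q ih =>
    rw [pathGraph_adj] at h
    rw [Walk.length_cons]
    omega

lemma apl_path_connected {n : ℕ} (hn : 0 < n) : (pathGraph n).Connected := by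
  obtain ⟨m, rfl⟩ : ∃ m, n = m + 1 := ⟨n - 1, by omega⟩
  exact pathGraph_connected m

lemma apl_path_dist {n : ℕ} (u v : Fin n) (huv : u.val ≤ v.val) :
    (pathGraph n).dist u v = v.val - u.val := by
  have hc : (pathGraph n).Connected := apl_path_connected (by omega)
  refine le_antisymm ?_ ?_
  · -- upper bound by induction on v.val - u.val
    have : ∀ (k : ℕ) (u v : Fin n), u.val ≤ v.val → v.val - u.val = k →
        (pathGraph n).dist u v ≤ k := by
      intro k
      induction k with
      | zero =>
        intro u v h1 h2
        have : u = v := Fin.ext (by omega)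
        rw [this, SimpleGraph.dist_self]
      | succ m ih =>
        intro u v h1 h2
        have hv1 : 1 ≤ v.val := by omega
        set w : Fin n := ⟨v.val - 1, by omega⟩ with hw
        have hadj : (pathGraph n).Adj w v := by
          rw [pathGraph_adj]; left; simp [hw]; omega
        have h3 := ih u w (by simp [hw]; omega) (by simp [hw]; omega)
        calc (pathGraph n).dist u v ≤ (pathGraph n).dist u w + (pathGraph n).dist w v :=
              hc.dist_triangle
          _ ≤ m + 1 := by
              have := SimpleGraph.dist_eq_one_iff_adj.mpr hadj
              omega
    exact this (v.val - u.val) u v huv rfl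
  · obtain ⟨p, hp⟩ := (hc u v).exists_walk_length_eq_dist
    rw [← hp]
    exact apl_path_lower p

lemma apl_double_sum {n : ℕ} (G : SimpleGraph (Fin n)) :
    ∑ u : Fin n, ∑ w : Fin n, G.dist u w
      = 2 * ∑ p ∈ univ.filter (fun p : Fin n × Fin n => p.1 < p.2), G.dist p.1 p.2 := by
  classical
  have hprod : ∑ u : Fin n, ∑ w : Fin n, G.dist u w
      = ∑ p : Fin n × Fin n, G.dist p.1 p.2 := (Fintype.sum_prod_type (fun p : Fin n × Fin n => G.dist p.1 p.2)).symm
  rw [hprod]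
  rw [← Finset.sum_filter_add_sum_filter_not univ (fun p : Fin n × Fin n => p.1 < p.2)
    (fun p => G.dist p.1 p.2)]
  have h1 : ∑ p ∈ univ.filter (fun p : Fin n × Fin n => p.2 < p.1), G.dist p.1 p.2
      = ∑ p ∈ univ.filter (fun p : Fin n × Fin n => ¬ p.1 < p.2), G.dist p.1 p.2 := by
    refine Finset.sum_subset ?_ ?_
    · intro p hp
      simp only [mem_filter, mem_univ, true_and] at hp ⊢
      exact lt_asymm hp
    · intro p hp hp2
      simp only [mem_filter, mem_univ, true_and] at hp hp2
      have : p.1 = p.2 := le_antisymm (le_of_not_gt hp2) (le_of_not_gt hp)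
      rw [this, SimpleGraph.dist_self]
  have h2 : ∑ p ∈ univ.filter (fun p : Fin n × Fin n => p.2 < p.1), G.dist p.1 p.2
      = ∑ p ∈ univ.filter (fun p : Fin n × Fin n => p.1 < p.2), G.dist p.1 p.2 := by
    refine Finset.sum_nbij' (fun p => (p.2, p.1)) (fun p => (p.2, p.1)) ?_ ?_ ?_ ?_ ?_
    · intro p hp; simp only [mem_filter, mem_univ, true_and] at hp ⊢; exact hp
    · intro p hp; simp only [mem_filter, mem_univ, true_and] at hp ⊢; exact hp
    · intro p _; rfl
    · intro p _; rfl
    · intro p _; exact SimpleGraph.dist_comm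
  rw [← h1, h2]
  ring

lemma apl_nat_id (n : ℕ) :
    6 * (∑ i ∈ range n, ∑ j ∈ range n, if i < j then j - i else 0) + n = n ^ 3 := by
  induction n with
  | zero => norm_num
  | succ m ih =>
    have hrow : ∀ i, ∑ j ∈ range (m+1), (if i < j then j - i else 0)
        = (∑ j ∈ range m, if i < j then j - i else 0) + (if i < m then m - i else 0) :=
      fun i => Finset.sum_range_succ _ m
    have hsplit : ∑ i ∈ range (m+1), ∑ j ∈ range (m+1), (if i < j then j - i else 0)
        = (∑ i ∈ range m, ∑ j ∈ range m, if i < j then j - i else 0)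
          + ∑ i ∈ range m, (if i < m then m - i else 0) := by
      rw [Finset.sum_range_succ]
      have hlast : ∑ j ∈ range (m+1), (if m < j then j - m else 0) = 0 := by
        apply Finset.sum_eq_zero
        intro j hj
        rw [mem_range] at hj
        have : ¬ m < j := by omega
        simp [this]
      rw [hlast, Nat.add_zero]
      rw [Finset.sum_congr rfl (fun i _ => hrow i), Finset.sum_add_distrib]
    have hlin : ∑ i ∈ range m, (if i < m then m - i else 0) = ∑ i ∈ range m, (m - i) := by
      refine Finset.sum_congr rfl fun i hi => ?_
      rw [mem_range] at hi
      simp [hi]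
    have hrefl : ∑ i ∈ range m, (m - i) = (∑ i ∈ range m, i) + m := by
      rw [← Finset.sum_range_reflect]
      rcases Nat.eq_zero_or_pos m with rfl | hm
      · simp
      calc ∑ i ∈ range m, (m - (m - 1 - i)) = ∑ i ∈ range m, (i + 1) := by
            refine Finset.sum_congr rfl fun i hi => ?_
            rw [mem_range] at hi
            omega
        _ = (∑ i ∈ range m, i) + m := by rw [Finset.sum_add_distrib]; simp
    have hgauss : (∑ i ∈ range m, i) * 2 = m * (m - 1) := Finset.sum_range_id_mul_two m
    rw [hsplit, hlin, hrefl]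
    rcases Nat.eq_zero_or_pos m with rfl | hm
    · simp
    obtain ⟨k, rfl⟩ : ∃ k, m = k + 1 := ⟨m - 1, by omega⟩
    simp only [Nat.add_sub_cancel] at hgauss
    zify at ih hgauss ⊢
    linear_combination ih + 3 * hgauss
/-- For a connected graph on `n ≥ 2` vertices, the average shortest path
length `l = (2/(n(n-1))) ∑_{i<j} d(i,j)` satisfies `l ≤ (n+1)/3`, and
equality is attained by the path graph. -/
theorem average_path_length_le (n : ℕ) (hn : 2 ≤ n) :
    (∀ G : SimpleGraph (Fin n), G.Connected →
      ((2 : ℚ) * ∑ p ∈ Finset.univ.filter (fun p : Fin n × Fin n => p.1 < p.2),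
          (G.dist p.1 p.2 : ℚ)) / ((n : ℚ) * ((n : ℚ) - 1)) ≤ ((n : ℚ) + 1) / 3) ∧
    ((2 : ℚ) * ∑ p ∈ Finset.univ.filter (fun p : Fin n × Fin n => p.1 < p.2),
        ((SimpleGraph.pathGraph n).dist p.1 p.2 : ℚ)) / ((n : ℚ) * ((n : ℚ) - 1))
      = ((n : ℚ) + 1) / 3 := by
  have hd1 : (0:ℚ) < (n : ℚ) * ((n : ℚ) - 1) := by
    have : (2:ℚ) ≤ (n:ℚ) := by exact_mod_cast hn
    nlinarith
  constructor
  · intro G hG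
    set Sf : ℕ := ∑ p ∈ univ.filter (fun p : Fin n × Fin n => p.1 < p.2), G.dist p.1 p.2 with hSf
    have hcast : ∑ p ∈ univ.filter (fun p : Fin n × Fin n => p.1 < p.2),
        (G.dist p.1 p.2 : ℚ) = (Sf : ℚ) := by
      rw [hSf]; push_cast; rfl
    rw [hcast, div_le_div_iff₀ hd1 (by norm_num)]
    have hord := apl_main n (Fin n) G hG (Fintype.card_fin n)
    rw [apl_double_sum] at hord
    rw [show 3 * (2 * Sf) = 6 * Sf from by ring] at hord
    have hq : 6 * (Sf : ℚ) + n ≤ (n:ℚ) ^ 3 := by exact_mod_cast hord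
    nlinarith [hq]
  · set Sp : ℕ := ∑ p ∈ univ.filter (fun p : Fin n × Fin n => p.1 < p.2),
        (pathGraph n).dist p.1 p.2 with hSp
    have hcast : ∑ p ∈ univ.filter (fun p : Fin n × Fin n => p.1 < p.2),
        ((pathGraph n).dist p.1 p.2 : ℚ) = (Sp : ℚ) := by
      rw [hSp]; push_cast; rfl
    have hval : Sp = ∑ i ∈ range n, ∑ j ∈ range n, if i < j then j - i else 0 := by
      rw [hSp]
      have h1 : ∑ p ∈ univ.filter (fun p : Fin n × Fin n => p.1 < p.2),
          (pathGraph n).dist p.1 p.2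
          = ∑ p : Fin n × Fin n, if p.1 < p.2 then p.2.val - p.1.val else 0 := by
        rw [Finset.sum_filter]
        refine Finset.sum_congr rfl fun p _ => ?_
        by_cases h : p.1 < p.2
        · simp only [h, if_true]
          exact apl_path_dist p.1 p.2 (le_of_lt h)
        · simp [h]
      rw [h1]
      rw [Fintype.sum_prod_type (f := fun p : Fin n × Fin n =>
        if p.1 < p.2 then p.2.val - p.1.val else 0)]
      have h2 : ∀ u : Fin n, ∑ w : Fin n, (if u < w then w.val - u.val else 0)
          = ∑ j ∈ range n, if u.val < j then j - u.val else 0 := by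
        intro u
        have := Fin.sum_univ_eq_sum_range (fun j => if u.val < j then j - u.val else 0) n
        rw [← this]
        refine Finset.sum_congr rfl fun w _ => ?_
        simp only [Fin.lt_def]
      rw [Finset.sum_congr rfl fun u _ => h2 u]
      exact Fin.sum_univ_eq_sum_range
        (fun i => ∑ j ∈ range n, if i < j then j - i else 0) n
    have hid := apl_nat_id n
    rw [← hval] at hid
    rw [hcast, div_eq_div_iff hd1.ne' (by norm_num : (3:ℚ) ≠ 0)]
    have hq : 6 * (Sp : ℚ) + n = (n:ℚ) ^ 3 := by exact_mod_cast hid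
    ring_nf
    ring_nf at hq
    linarith [hq]
end

section
/- In the simplicial complex S_l^k with l ≥ 2, the central (k-1)-simplex is upper adjacent to every other (k-1)-simplex that is a face of one of the l k-simplices; consequently S_l^k is s^k-connected but not s^{k-1}-connected (for k ≥ 2). -/
/-- Lower adjacency: the two simplices share a common face with `k` vertices. -/
def lowerAdj {V : Type*} [DecidableEq V] (C : Set (Finset V)) (k : ℕ)
    (σ τ : Finset V) : Prop :=
  ∃ μ ∈ C, μ.card = k ∧ μ ⊆ σ ∧ μ ⊆ τ

/-- Upper adjacency: the two simplices are faces of a common simplex with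
`k+2` vertices. -/
def upperAdj {V : Type*} [DecidableEq V] (C : Set (Finset V)) (k : ℕ)
    (σ τ : Finset V) : Prop :=
  ∃ ρ ∈ C, ρ.card = k + 2 ∧ σ ⊆ ρ ∧ τ ⊆ ρ

/-- `s`-adjacency of `k`-simplices: for `k ≥ 1`, lower adjacent and not upper
adjacent; for `k = 0`, upper adjacent. -/
def sAdj {V : Type*} [DecidableEq V] (C : Set (Finset V)) (k : ℕ)
    (σ τ : Finset V) : Prop :=
  σ ≠ τ ∧ σ ∈ C ∧ τ ∈ C ∧ σ.card = k + 1 ∧ τ.card = k + 1 ∧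
    (if k = 0 then upperAdj C 0 σ τ else lowerAdj C k σ τ ∧ ¬ upperAdj C k σ τ)

/-- The underlying network of simplices at level `k`: vertices are the
`k`-simplices and edges are given by `s`-adjacency. -/
def simplexGraph {V : Type*} [DecidableEq V] (C : Set (Finset V)) (k : ℕ) :
    SimpleGraph (Finset V) :=
  SimpleGraph.fromRel (sAdj C k)

lemma isolated_reachable_eq {W : Type*} (G : SimpleGraph W) (a b : W)
    (hiso : ∀ c, ¬ G.Adj a c) (h : G.Reachable a b) : a = b := by
  obtain ⟨w⟩ := h
  cases w with
  | nil => rfl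
  | cons ha _ => exact absurd ha (hiso _)

/-- In the simplicial complex `S_l^k` with `l ≥ 2` and `k ≥ 2`, the central
`(k-1)`-simplex `F` is upper adjacent to every other `(k-1)`-simplex (which is
a face of one of the `l` `k`-simplices); consequently `S_l^k` is
`s^k`-connected but not `s^{k-1}`-connected. -/
theorem Slk_connectivity {V : Type*} [DecidableEq V]
    (k l : ℕ) (hk : 2 ≤ k) (hl : 2 ≤ l)
    (F : Finset V) (hF : F.card = k) (v : Fin l ↪ V) (hv : ∀ i, v i ∉ F)
    (C : Set (Finset V)) (hC : C = {s : Finset V | ∃ i : Fin l, s ⊆ insert (v i) F}) :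
    (∀ τ ∈ C, τ.card = k → τ ≠ F → upperAdj C (k - 1) F τ) ∧
    (∀ σ τ : Finset V, σ ∈ C → τ ∈ C → σ.card = k + 1 → τ.card = k + 1 →
      (simplexGraph C k).Reachable σ τ) ∧
    ¬ (∀ σ τ : Finset V, σ ∈ C → τ ∈ C → σ.card = k → τ.card = k →
      (simplexGraph C (k - 1)).Reachable σ τ) :=  by
  have hl0 : (0 : ℕ) < l := by omega
  have hFC : F ∈ C := by
    rw [hC]; exact ⟨⟨0, hl0⟩, Finset.subset_insert _ _⟩
  have hins : ∀ i : Fin l, (insert (v i) F).card = k + 1 := fun i => by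
    rw [Finset.card_insert_of_notMem (hv i), hF]
  have hinsC : ∀ i : Fin l, insert (v i) F ∈ C := fun i => by
    rw [hC]; exact ⟨i, subset_refl _⟩
  have hcardle : ∀ s ∈ C, s.card ≤ k + 1 := by
    intro s hs; rw [hC] at hs; obtain ⟨i, hi⟩ := hs
    calc s.card ≤ (insert (v i) F).card := Finset.card_le_card hi
      _ = k + 1 := hins i
  have hupper : ∀ τ ∈ C, τ.card = k → upperAdj C (k - 1) F τ := by
    intro τ hτ _
    have hτ' := hτ
    rw [hC] at hτ'; obtain ⟨i, hi⟩ := hτ'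
    exact ⟨insert (v i) F, hinsC i, by rw [hins i]; omega,
      Finset.subset_insert _ _, hi⟩
  have hnoupper : ∀ σ τ : Finset V, ¬ upperAdj C k σ τ := by
    rintro σ τ ⟨ρ, hρC, hρcard, -, -⟩
    have := hcardle ρ hρC
    omega
  refine ⟨fun τ hτ hτc _ => hupper τ hτ hτc, ?_, ?_⟩
  · intro σ τ hσ hτ hσc hτc
    by_cases hne : σ = τ
    · subst hne; exact SimpleGraph.Reachable.refl _
    · have hFσ : F ⊆ σ := by
        rw [hC] at hσ; obtain ⟨i, hi⟩ := hσ
        have : σ = insert (v i) F :=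
          Finset.eq_of_subset_of_card_le hi (by rw [hins i, hσc])
        rw [this]; exact Finset.subset_insert _ _
      have hFτ : F ⊆ τ := by
        rw [hC] at hτ; obtain ⟨i, hi⟩ := hτ
        have : τ = insert (v i) F :=
          Finset.eq_of_subset_of_card_le hi (by rw [hins i, hτc])
        rw [this]; exact Finset.subset_insert _ _
      have hadj : (simplexGraph C k).Adj σ τ := by
        rw [simplexGraph, SimpleGraph.fromRel_adj]
        refine ⟨hne, Or.inl ⟨hne, hσ, hτ, hσc, hτc, ?_⟩⟩
        rw [if_neg (by omega : ¬ k = 0)]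
        exact ⟨⟨F, hFC, hF, hFσ, hFτ⟩, hnoupper σ τ⟩
      exact hadj.reachable
  · intro h
    -- F is isolated in simplexGraph C (k-1)
    have hiso : ∀ τ : Finset V, ¬ (simplexGraph C (k - 1)).Adj F τ := by
      intro τ hadj
      rw [simplexGraph, SimpleGraph.fromRel_adj] at hadj
      obtain ⟨hne, hrel⟩ := hadj
      have hk1 : ¬ (k - 1 = 0) := by omega
      rcases hrel with ⟨-, -, hτC, -, hτc, hrest⟩ | ⟨-, hτC, -, hτc, -, hrest⟩
      · rw [if_neg hk1] at hrest
        exact hrest.2 (hupper τ hτC (by omega))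
      · rw [if_neg hk1] at hrest
        obtain ⟨ρ, hρC, hρc, hFρ, hτρ⟩ := hupper τ hτC (by omega)
        exact hrest.2 ⟨ρ, hρC, hρc, hτρ, hFρ⟩
    have hFne : F.Nonempty := Finset.card_pos.mp (by omega)
    obtain ⟨x, hx⟩ := hFne
    set i0 : Fin l := ⟨0, hl0⟩
    set τ : Finset V := insert (v i0) (F.erase x) with hτdef
    have hvτ : v i0 ∉ F.erase x := fun h => hv i0 (Finset.mem_of_mem_erase h)
    have hτc : τ.card = k := by
      rw [hτdef, Finset.card_insert_of_notMem hvτ, Finset.card_erase_of_mem hx, hF]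
      omega
    have hτC : τ ∈ C := by
      rw [hC]
      exact ⟨i0, Finset.insert_subset_insert _ (Finset.erase_subset _ _)⟩
    have hFτ : F ≠ τ := by
      intro hEq
      exact hv i0 (hEq ▸ Finset.mem_insert_self (v i0) (F.erase x))
    exact hFτ (isolated_reachable_eq _ _ _ hiso (h F τ hFC hτC hF hτc))
end
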